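/- arXiv:2005.05392 — 2 statements merged into one kernel-verified Lean document; each statement's English description precedes it below -/
import Mathlib

section
/- Let P0, Pi be symmetric positive definite 2×2 (or n×n) matrices with Pi ≻ P0, μi ≥ μ0 ≥ 0, and points x0 ≠ xi satisfying (x0 − xi)ᵀ P0 (x0 − xi) + μ0 > μi. Define Pi0 := Pi − P0, χi0 := Pi xi − P0 x0, σi0 := xiᵀ Pi xi + μi − x0ᵀ P0 x0 − μ0, and ℓi0 := χi0ᵀ Pi0⁻¹ χi0 − σi0. Then ℓi0 > 0. -/
/-!
Completing the square with `c := (Pi - P0)⁻¹ χi0` writes `ℓi0` as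
`(xi - c)ᵀ (Pi - P0) (xi - c) + ((x0 - xi)ᵀ P0 (x0 - xi) + μ0 - μi)`.
The first term is nonnegative because `Pi - P0` is positive semidefinite, and the second is
positive by assumption.
-/

open Matrix

namespace Matrix

variable {R m : Type*} [CommRing R] [Fintype m]

theorem IsSymm.dotProduct_mulVec_comm {A : Matrix m m R} (hA : A.IsSymm) (x y : m → R) :
    x ⬝ᵥ A *ᵥ y = y ⬝ᵥ A *ᵥ x := by
  simpa only [hA.eq] using dotProduct_transpose_mulVec A x y

theorem IsSymm.dotProduct_mulVec_sub_sub {A : Matrix m m R} (hA : A.IsSymm) (x y : m → R) :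
    (x - y) ⬝ᵥ A *ᵥ (x - y) = x ⬝ᵥ A *ᵥ x - 2 * (x ⬝ᵥ A *ᵥ y) + y ⬝ᵥ A *ᵥ y := by
  rw [mulVec_sub, dotProduct_sub, sub_dotProduct, sub_dotProduct, hA.dotProduct_mulVec_comm y x]
  ring

variable [DecidableEq m]

theorem IsSymm.dotProduct_inv_mulVec_eq {Q : Matrix m m R} (hQ : Q.IsSymm) (hdet : IsUnit Q.det)
    (χ x : m → R) :
    χ ⬝ᵥ Q⁻¹ *ᵥ χ =
      (x - Q⁻¹ *ᵥ χ) ⬝ᵥ Q *ᵥ (x - Q⁻¹ *ᵥ χ) + 2 * (x ⬝ᵥ χ) - x ⬝ᵥ Q *ᵥ x := by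
  have hQc : Q *ᵥ (Q⁻¹ *ᵥ χ) = χ := by rw [mulVec_mulVec, mul_nonsing_inv _ hdet, one_mulVec]
  rw [hQ.dotProduct_mulVec_sub_sub, hQc, dotProduct_comm (Q⁻¹ *ᵥ χ) χ]
  ring

theorem dotProduct_inv_sub_mulVec_sub_eq {P₀ P : Matrix m m R} (hP₀ : P₀.IsSymm)
    (hQ : (P - P₀).IsSymm) (hdet : IsUnit (P - P₀).det) (x₀ x : m → R) :
    let c := (P - P₀)⁻¹ *ᵥ (P *ᵥ x - P₀ *ᵥ x₀)
    (P *ᵥ x - P₀ *ᵥ x₀) ⬝ᵥ ((P - P₀)⁻¹ *ᵥ (P *ᵥ x - P₀ *ᵥ x₀)) -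
        (x ⬝ᵥ P *ᵥ x - x₀ ⬝ᵥ P₀ *ᵥ x₀) =
      (x - c) ⬝ᵥ (P - P₀) *ᵥ (x - c) + (x₀ - x) ⬝ᵥ P₀ *ᵥ (x₀ - x) := by
  intro c
  rw [hQ.dotProduct_inv_mulVec_eq hdet _ x, hP₀.dotProduct_mulVec_sub_sub,
    hP₀.dotProduct_mulVec_comm x₀ x]
  simp only [sub_mulVec, dotProduct_sub]
  ring

end Matrix

theorem stmt4_general (n : ℕ) (P0 Pi : Matrix (Fin n) (Fin n) ℝ)
    (hP0 : P0.PosDef) (hPP : (Pi - P0).PosDef)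
    (μ0 μi : ℝ)
    (x0 xi : Fin n → ℝ)
    (hass : (x0 - xi) ⬝ᵥ (P0 *ᵥ (x0 - xi)) + μ0 > μi) :
    0 < (Pi *ᵥ xi - P0 *ᵥ x0) ⬝ᵥ ((Pi - P0)⁻¹ *ᵥ (Pi *ᵥ xi - P0 *ᵥ x0)) -
      (xi ⬝ᵥ (Pi *ᵥ xi) + μi - x0 ⬝ᵥ (P0 *ᵥ x0) - μ0) := by
  have hsymm : ∀ {A : Matrix (Fin n) (Fin n) ℝ}, A.PosDef → A.IsSymm :=
    fun hA ↦ isHermitian_iff_isSymm.mp hA.isHermitian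
  have hsquare := dotProduct_inv_sub_mulVec_sub_eq (hsymm hP0) (hsymm hPP)
    hPP.det_pos.ne'.isUnit x0 xi
  have hnonneg := hPP.posSemidef.dotProduct_mulVec_nonneg
    (xi - (Pi - P0)⁻¹ *ᵥ (Pi *ᵥ xi - P0 *ᵥ x0))
  simp only [star_trivial] at hnonneg
  linarith

theorem stmt4 (n : ℕ) (P0 Pi : Matrix (Fin n) (Fin n) ℝ)
    (hP0 : P0.PosDef) (hPi : Pi.PosDef) (hPP : (Pi - P0).PosDef)
    (μ0 μi : ℝ) (hμ0 : 0 ≤ μ0) (hμ : μ0 ≤ μi)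
    (x0 xi : Fin n → ℝ) (hx : x0 ≠ xi)
    (hass : (x0 - xi) ⬝ᵥ (P0 *ᵥ (x0 - xi)) + μ0 > μi) :
    0 < (Pi *ᵥ xi - P0 *ᵥ x0) ⬝ᵥ ((Pi - P0)⁻¹ *ᵥ (Pi *ᵥ xi - P0 *ᵥ x0)) -
      (xi ⬝ᵥ (Pi *ᵥ xi) + μi - x0 ⬝ᵥ (P0 *ᵥ x0) - μ0) :=
  stmt4_general n P0 Pi hP0 hPP μ0 μi x0 xi hass
end

section
/- Let δ_j(x;x_j) = (x−x_j)ᵀ P_j (x−x_j) + μ_j for j = 0,…,n with P_j positive definite, and define the Voronoi-like cell V^i = {x ∈ S : δ_i(x;x_i) ≤ min_{j≠i} δ_j(x;x_j)}. If P_i ≻ P_0 and Ei denotes the ellipsoid Ei = {x : (x − Pi0⁻¹χi0)ᵀ Pi0 (x − Pi0⁻¹χi0) ≤ ℓi0} with the standard notation, then V^i ⊆ Ei ∩ S. -/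
open Matrix

lemma symm_dot {d : ℕ} {M : Matrix (Fin d) (Fin d) ℝ} (hM : Mᵀ = M)
    (a b : Fin d → ℝ) : a ⬝ᵥ (M *ᵥ b) = b ⬝ᵥ (M *ᵥ a) := by
  rw [dotProduct_mulVec, ← mulVec_transpose, hM, dotProduct_comm]

lemma real_posdef_symm {d : ℕ} {M : Matrix (Fin d) (Fin d) ℝ} (h : M.PosDef) : Mᵀ = M := by
  have := h.isHermitian
  ext a b
  simpa using congrFun (congrFun this a) b

theorem stmt7 (n d : ℕ) (x : Fin (n + 1) → (Fin d → ℝ))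
    (P : Fin (n + 1) → Matrix (Fin d) (Fin d) ℝ) (μ : Fin (n + 1) → ℝ)
    (hP : ∀ j, (P j).PosDef) (S : Set (Fin d → ℝ))
    (i : Fin (n + 1)) (hi : i ≠ 0) (hPP : (P i - P 0).PosDef) :
    {y ∈ S | ∀ j, j ≠ i →
        (y - x i) ⬝ᵥ (P i *ᵥ (y - x i)) + μ i ≤ (y - x j) ⬝ᵥ (P j *ᵥ (y - x j)) + μ j} ⊆
      {y : Fin d → ℝ |
        (y - (P i - P 0)⁻¹ *ᵥ (P i *ᵥ x i - P 0 *ᵥ x 0)) ⬝ᵥ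
            ((P i - P 0) *ᵥ (y - (P i - P 0)⁻¹ *ᵥ (P i *ᵥ x i - P 0 *ᵥ x 0))) ≤
          (P i *ᵥ x i - P 0 *ᵥ x 0) ⬝ᵥ ((P i - P 0)⁻¹ *ᵥ (P i *ᵥ x i - P 0 *ᵥ x 0)) -
            (x i ⬝ᵥ (P i *ᵥ x i) + μ i - x 0 ⬝ᵥ (P 0 *ᵥ x 0) - μ 0)} ∩ S := by
  rintro y ⟨hyS, hy⟩
  refine ⟨?_, hyS⟩
  have h0 := hy 0 (Ne.symm hi)
  set M := P i - P 0 with hMdef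
  set χ := P i *ᵥ x i - P 0 *ᵥ x 0 with hχdef
  have hMsymm : Mᵀ = M := real_posdef_symm hPP
  have hisymm : (P i)ᵀ = P i := real_posdef_symm (hP i)
  have h0symm : (P 0)ᵀ = P 0 := real_posdef_symm (hP 0)
  have hMc : M *ᵥ (M⁻¹ *ᵥ χ) = χ := by
    rw [mulVec_mulVec, Matrix.mul_nonsing_inv _ (isUnit_iff_ne_zero.mpr hPP.det_pos.ne'), one_mulVec]
  set c := M⁻¹ *ᵥ χ with hcdef
  show (y - c) ⬝ᵥ (M *ᵥ (y - c)) ≤ χ ⬝ᵥ c - _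
  have e1 : c ⬝ᵥ (M *ᵥ y) = y ⬝ᵥ χ := by rw [symm_dot hMsymm, hMc]
  have e2 : c ⬝ᵥ (M *ᵥ c) = χ ⬝ᵥ c := by rw [symm_dot hMsymm, hMc, dotProduct_comm]
  have e3 : y ⬝ᵥ (M *ᵥ c) = y ⬝ᵥ χ := by rw [hMc]
  have e6 : χ ⬝ᵥ c = c ⬝ᵥ χ := dotProduct_comm _ _
  have e4 : x i ⬝ᵥ (P i *ᵥ y) = y ⬝ᵥ (P i *ᵥ x i) := symm_dot hisymm _ _
  have e5 : x 0 ⬝ᵥ (P 0 *ᵥ y) = y ⬝ᵥ (P 0 *ᵥ x 0) := symm_dot h0symm _ _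
  have hM : ∀ v, M *ᵥ v = P i *ᵥ v - P 0 *ᵥ v := fun v => sub_mulVec _ _ _
  simp only [mulVec_sub, sub_dotProduct, dotProduct_sub, hM, hχdef] at *
  linarith
end
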